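/- Let 𝔞₁ and 𝔞₂ be ideals of A both containing 𝔦₀. If 𝔞₁⋈^{f,g}(𝔟,𝔠) ⊆ 𝔞₂⋈^{f,g}(𝔟,𝔠), then 𝔞₁ ⊆ 𝔞₂. -/

import Mathlib

namespace Ideal

variable {A B C : Type*} [CommRing A] [CommRing B] [CommRing C]

/-- The ideal `𝔞 ⋈^{f,g} (𝔟, 𝔠)` of the bi-amalgamation, as a subset of `B × C`. -/
def biAmalgamation (f : A →+* B) (g : A →+* C) (𝔟 : Ideal B) (𝔠 : Ideal C) (𝔞 : Ideal A) :
    Set (B × C) :=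
  {x | ∃ p ∈ 𝔞, ∃ β ∈ 𝔟, ∃ γ ∈ 𝔠, x = (f p + β, g p + γ)}

variable {f : A →+* B} {g : A →+* C} {𝔟 : Ideal B} {𝔠 : Ideal C} {𝔞 : Ideal A} {a : A}

theorem map_mem_biAmalgamation (ha : a ∈ 𝔞) : (f a, g a) ∈ biAmalgamation f g 𝔟 𝔠 𝔞 :=
  ⟨a, ha, 0, 𝔟.zero_mem, 0, 𝔠.zero_mem, by simp⟩

theorem mem_of_map_mem_biAmalgamation (h𝔞 : 𝔟.comap f ≤ 𝔞)
    (hx : (f a, g a) ∈ biAmalgamation f g 𝔟 𝔠 𝔞) : a ∈ 𝔞 := by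
  obtain ⟨p, hp, β, hβ, γ, -, hx⟩ := hx
  have hfa : f a = f p + β := congrArg Prod.fst hx
  have hdiff : a - p ∈ 𝔟.comap f := by
    rwa [mem_comap, map_sub, hfa, add_sub_cancel_left]
  simpa using 𝔞.add_mem (h𝔞 hdiff) hp

end Ideal

open Ideal in
theorem biAmalgamation_ideal_subset {A B C : Type*} [CommRing A] [CommRing B] [CommRing C]
    (f : A →+* B) (g : A →+* C) (𝔟 : Ideal B) (𝔠 : Ideal C)
    (𝔞₁ 𝔞₂ : Ideal A) (h₂ : 𝔟.comap f ≤ 𝔞₂)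
    (hsub : {x : B × C | ∃ p ∈ 𝔞₁, ∃ β ∈ 𝔟, ∃ γ ∈ 𝔠, x = (f p + β, g p + γ)} ⊆
            {x : B × C | ∃ p ∈ 𝔞₂, ∃ β ∈ 𝔟, ∃ γ ∈ 𝔠, x = (f p + β, g p + γ)}) :
    𝔞₁ ≤ 𝔞₂ := fun _ ha =>
  mem_of_map_mem_biAmalgamation (𝔠 := 𝔠) h₂ (hsub (map_mem_biAmalgamation ha))
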